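/- Every separating cycle in a connected ribbon graph is reversible: if no path witnesses that the cycle C is nonseparating, then for any unicycle (ρ, v) with C(ρ) = C, the configuration (ρ̄, v) obtained by reversing the edges of C is reachable from (ρ, v) by rotor-routing. -/

import Mathlib

/-- A ribbon graph: a finite connected multigraph without self-loops, presented
by darts (directed half-edges), together with a cyclic ordering `next` of the
darts based at each vertex. -/
structure RibbonGraph where
  V : Type
  D : Type
  fV : Fintype V
  dV : DecidableEq V
  fD : Fintype D
  dD : DecidableEq D
  nV : Nonempty V
  src : D → V
  rev : D → D
  rev_rev : ∀ d, rev (rev d) = d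
  no_loop : ∀ d, src (rev d) ≠ src d
  next : Equiv.Perm D
  src_next : ∀ d, src (next d) = src d
  next_cyclic : ∀ d e, src d = src e → ∃ n : ℕ, (⇑next)^[n] d = e
  conn : ∀ u v : V,
    Relation.ReflTransGen (fun a b => ∃ d, src d = a ∧ src (rev d) = b) u v

attribute [instance] RibbonGraph.fV RibbonGraph.dV RibbonGraph.fD RibbonGraph.dD

namespace RibbonGraph

variable (G : RibbonGraph)

/-- The endpoint of a dart. -/
def tgt (d : G.D) : G.V := G.src (G.rev d)

/-- A rotor configuration: an outgoing dart at every vertex. -/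
def RotorConfig := {ρ : G.V → G.D // ∀ v, G.src (ρ v) = v}

/-- One step of the rotor-routing process: advance the rotor at the chip's
position to the next dart in the cyclic order, then move the chip along it. -/
def rrStep (p : G.RotorConfig × G.V) : G.RotorConfig × G.V :=
  (⟨fun v => if v = p.2 then G.next (p.1.1 p.2) else p.1.1 v, by
      intro v
      simp only []
      by_cases h : v = p.2
      · rw [if_pos h, G.src_next, p.1.2, h]
      · rw [if_neg h]
        exact p.1.2 v⟩,
    G.tgt (G.next (p.1.1 p.2)))

/-- The functional graph of a rotor configuration: follow the rotor. -/
def cfgStep (ρ : G.RotorConfig) (v : G.V) : G.V := G.tgt (ρ.1 v)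

/-- A vertex is periodic (lies on a directed cycle of the rotor configuration). -/
def Periodic (ρ : G.RotorConfig) (v : G.V) : Prop :=
  ∃ n : ℕ, 0 < n ∧ (G.cfgStep ρ)^[n] v = v

/-- A unicycle: a rotor configuration with exactly one directed cycle, together
with a chip position on that cycle. -/
def Unicycle (p : G.RotorConfig × G.V) : Prop :=
  G.Periodic p.1 p.2 ∧
    ∀ u w, G.Periodic p.1 u → G.Periodic p.1 w → ∃ n : ℕ, (G.cfgStep p.1)^[n] u = w

/-- `(σ, y)` is reachable from `(ρ, x)` by a positive number of rotor-routing steps. -/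
def Reaches (p q : G.RotorConfig × G.V) : Prop :=
  ∃ n : ℕ, 0 < n ∧ (G.rrStep)^[n] p = q

/-- `σ` is obtained from `ρ` by reversing the directed cycle(s) of `ρ` and keeping
all other rotors: off the cycle the rotors agree, and the rotor of `σ` at the head
of a cycle dart of `ρ` is that dart reversed. -/
def IsReversal (ρ σ : G.RotorConfig) : Prop :=
  (∀ v, ¬ G.Periodic ρ v → σ.1 v = ρ.1 v) ∧
  (∀ v, G.Periodic ρ v → σ.1 (G.tgt (ρ.1 v)) = G.rev (ρ.1 v))

/-- Two rotor configurations have the same directed cycle. -/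
def SameCycle (ρ τ : G.RotorConfig) : Prop :=
  ∀ v, (G.Periodic ρ v ↔ G.Periodic τ v) ∧ (G.Periodic ρ v → ρ.1 v = τ.1 v)

/-- The directed cycle of `ρ` is reversible: from any unicycle whose rotor
configuration has the same directed cycle, the reversed state is reachable. -/
def CycleReversible (ρ : G.RotorConfig) : Prop :=
  ∀ τ v σ, G.SameCycle ρ τ → G.Periodic τ v → G.IsReversal τ σ →
    G.Reaches (τ, v) (σ, v)

/-- A directed cycle in a ribbon graph: a cyclically closed, vertex-injective,
nonempty list of darts. -/
structure DirCycle where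
  darts : List G.D
  ne : darts ≠ []
  chain : darts.Chain' (fun a b => G.tgt a = G.src b)
  wrap : G.tgt (darts.getLast ne) = G.src (darts.head ne)
  nodupV : (darts.map G.src).Nodup

/-- The vertices of a directed cycle. -/
def cverts (C : G.DirCycle) : List G.V := C.darts.map G.src

/-- A dart `e` based at a vertex of `C` lies on the right of `C`: it occurs
strictly after the outgoing dart of `C` and strictly before the reversed
incoming dart of `C` in the cyclic order at its base vertex. -/
def RightOf (C : G.DirCycle) (e : G.D) : Prop :=
  ∃ dout ∈ C.darts, ∃ din ∈ C.darts,
    G.src dout = G.src e ∧ G.tgt din = G.src e ∧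
    ∃ k j : ℕ, 0 < k ∧ k < j ∧ (⇑G.next)^[k] dout = e ∧ (⇑G.next)^[j] dout = G.rev din ∧
      ∀ j', 0 < j' → j' < j → (⇑G.next)^[j'] dout ≠ G.rev din

/-- A dart `e` based at a vertex of `C` lies on the left of `C`: it occurs
strictly after the reversed incoming dart of `C` and strictly before the
outgoing dart of `C` in the cyclic order at its base vertex. -/
def LeftOf (C : G.DirCycle) (e : G.D) : Prop :=
  ∃ dout ∈ C.darts, ∃ din ∈ C.darts,
    G.src dout = G.src e ∧ G.tgt din = G.src e ∧
    ∃ k j : ℕ, 0 < k ∧ k < j ∧ (⇑G.next)^[k] (G.rev din) = e ∧ (⇑G.next)^[j] (G.rev din) = dout ∧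
      ∀ j', 0 < j' → j' < j → (⇑G.next)^[j'] (G.rev din) ≠ dout

/-- A path witnessing that the cycle `C` is nonseparating: an edge-injective path
whose endpoints lie on `C`, which is otherwise disjoint from `C`, whose first
edge is on the left of `C` and whose last edge is on the right of `C`. -/
def IsWitness (C : G.DirCycle) (p : List G.D) : Prop :=
  ∃ hp : p ≠ [],
    p.Chain' (fun a b => G.tgt a = G.src b) ∧
    G.src (p.head hp) ∈ G.cverts C ∧
    G.tgt (p.getLast hp) ∈ G.cverts C ∧
    (∀ i : Fin p.length, i.1 ≠ 0 → G.src (p.get i) ∉ G.cverts C) ∧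
    (∀ i j : Fin p.length, i ≠ j → p.get i ≠ p.get j ∧ p.get i ≠ G.rev (p.get j)) ∧
    G.LeftOf C (p.head hp) ∧
    G.RightOf C (G.rev (p.getLast hp))

/-- The cycle `C` is separating (no witness to the contrary exists). -/
def Separating (C : G.DirCycle) : Prop := ∀ p : List G.D, ¬ G.IsWitness C p

/-- The ribbon graph is planar: every cycle is separating. -/
def Planar : Prop := ∀ C : G.DirCycle, G.Separating C

/-- `C` is the unique directed cycle of the rotor configuration `ρ`. -/
def IsCycleOf (ρ : G.RotorConfig) (C : G.DirCycle) : Prop :=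
  (∀ d ∈ C.darts, ρ.1 (G.src d) = d) ∧ (∀ v, G.Periodic ρ v → v ∈ G.cverts C)

/-- The cycle `C` is reversible: from any unicycle whose unique directed cycle is
`C` and whose chip lies on `C`, the state with `C` reversed is reachable by
rotor-routing. -/
def Reversible (C : G.DirCycle) : Prop :=
  ∀ (ρ : G.RotorConfig) (v : G.V) (σ : G.RotorConfig),
    G.IsCycleOf ρ C → v ∈ G.cverts C → G.IsReversal ρ σ → G.Reaches (ρ, v) (σ, v)

/-- A spanning tree of a ribbon graph: a `rev`-closed set of darts that connects
all vertices and has the dart count of a tree. -/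
structure SpanningTree where
  edges : Finset G.D
  rev_mem : ∀ d ∈ edges, G.rev d ∈ edges
  conn : ∀ u v : G.V,
    Relation.ReflTransGen (fun a b => ∃ d ∈ edges, G.src d = a ∧ G.tgt d = b) u v
  card_eq : edges.card = 2 * (Fintype.card G.V - 1)

/-- `ρ` orients the spanning tree `T` toward the root `r`: away from `r` the
rotors are tree darts, and following the rotors from any vertex reaches `r`. -/
def TowardRoot (T : G.SpanningTree) (r : G.V) (ρ : G.RotorConfig) : Prop :=
  (∀ v, v ≠ r → ρ.1 v ∈ T.edges) ∧ (∀ v, ∃ n : ℕ, (G.cfgStep ρ)^[n] v = r)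

/-- The rotor-routing action of the divisor `v - r` with basepoint `r` sends the
spanning tree `T` to `T'`: orient `T` toward `r`, place the chip at `v`, iterate
rotor-routing until the chip first reaches `r`, and read off the resulting
spanning tree oriented toward `r`.  (The rotor at `r` itself is irrelevant: the
chip is never routed from `r`.) -/
def RRAct (r v : G.V) (T T' : G.SpanningTree) : Prop :=
  ∃ ρ : G.RotorConfig, G.TowardRoot T r ρ ∧
    ∃ n : ℕ, (∀ k, k < n → ((G.rrStep)^[k] (ρ, v)).2 ≠ r) ∧
      ((G.rrStep)^[n] (ρ, v)).2 = r ∧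
      G.TowardRoot T' r ((G.rrStep)^[n] (ρ, v)).1

/-- The divisor `v - r` as a function on vertices. -/
def genDiv (v r : G.V) : G.V → ℤ :=
  fun w => (if w = v then (1 : ℤ) else 0) - (if w = r then 1 else 0)

/-- The rotor-routing action of an arbitrary divisor `D ∈ Div⁰(G)` with basepoint
`r` on spanning trees, generated by the actions of the divisors `v - r` and
their inverses. -/
inductive DivAct (r : G.V) : (G.V → ℤ) → G.SpanningTree → G.SpanningTree → Prop
  | zero (T : G.SpanningTree) : DivAct r 0 T T
  | step (v : G.V) (D : G.V → ℤ) (T T' T'' : G.SpanningTree) :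
      DivAct r D T T' → G.RRAct r v T' T'' → DivAct r (D + G.genDiv v r) T T''
  | inv (v : G.V) (D : G.V → ℤ) (T T' T'' : G.SpanningTree) :
      DivAct r D T T' → G.RRAct r v T'' T' → DivAct r (D - G.genDiv v r) T T''

end RibbonGraph

/-! Reversing `C` is achieved by a single rotor walk with an explicit odometer: each rotor on `C`
turns from the outgoing cycle dart to the reversed incoming one, each rotor on the right side of
`C` makes one full turn, and all other rotors stay. Because `C` is separating, the darts traversed
this way enter every vertex as often as they leave it: an unbalanced vertex would produce a path
from the left of `C` to its right. A rotor walk is determined by its odometer as soon as the chip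
is conserved and the final rotors lead to the final chip position, so the walk from `(ρ, v)` ends
in the reversed configuration. -/

lemma Function.exists_isPeriodicPt_iterate {α : Type*} [Finite α] (f : α → α) (x : α) :
    ∃ m n, 0 < n ∧ Function.IsPeriodicPt f n (f^[m] x) := by
  obtain ⟨i, j, hij, h⟩ := Finite.exists_ne_map_eq_of_infinite (fun n => f^[n] x)
  wlog hlt : i < j generalizing i j
  · exact this j i hij.symm h.symm (by omega)
  refine ⟨i, j - i, by omega, ?_⟩
  rw [Function.IsPeriodicPt, Function.IsFixedPt, ← Function.iterate_add_apply,
    Nat.sub_add_cancel hlt.le]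
  exact h.symm

lemma Function.exists_iterate_mem_of_eq_of_notMem {α : Type*} {f g : α → α} {s : Set α}
    (h : ∀ x ∉ s, g x = f x) {m : ℕ} {x : α} (hm : f^[m] x ∈ s) : ∃ n, g^[n] x ∈ s := by
  induction m generalizing x with
  | zero => exact ⟨0, hm⟩
  | succ m ih =>
    by_cases hx : x ∈ s
    · exact ⟨0, hx⟩
    obtain ⟨n, hn⟩ := ih (x := f x) hm
    exact ⟨n + 1, by rwa [Function.iterate_succ_apply, h x hx]⟩

namespace RibbonGraph

open Finset Function

variable {G : RibbonGraph}

@[simp]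
lemma src_rev (d : G.D) : G.src (G.rev d) = G.tgt d := rfl

@[simp]
lemma tgt_rev (d : G.D) : G.tgt (G.rev d) = G.src d := by
  rw [tgt, G.rev_rev]

lemma rev_injective : Injective G.rev := Involutive.injective G.rev_rev

@[simp]
lemma src_iterate_next (k : ℕ) (d : G.D) : G.src ((⇑G.next)^[k] d) = G.src d := by
  induction k with
  | zero => rfl
  | succ k ih => rw [iterate_succ_apply', G.src_next, ih]

@[simp]
lemma RotorConfig.src_apply (ρ : G.RotorConfig) (u : G.V) : G.src (ρ.1 u) = u := ρ.2 u

/-- The degree of `u`, as the length of the cyclic order of darts at `u`. -/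
noncomputable def period (ρ : G.RotorConfig) (u : G.V) : ℕ := minimalPeriod G.next (ρ.1 u)

lemma period_pos (ρ : G.RotorConfig) (u : G.V) : 0 < period ρ u :=
  minimalPeriod_pos_of_mem_periodicPts (G.next.injective.mem_periodicPts _)

lemma iterate_period (ρ : G.RotorConfig) (u : G.V) :
    (⇑G.next)^[period ρ u] (ρ.1 u) = ρ.1 u :=
  iterate_minimalPeriod

lemma iterate_injOn_Ioc_period (ρ : G.RotorConfig) (u : G.V) :
    Set.InjOn (fun k => (⇑G.next)^[k] (ρ.1 u)) (Set.Ioc 0 (period ρ u)) := by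
  intro i hi j hj hij
  have hnext : minimalPeriod G.next (G.next (ρ.1 u)) = period ρ u :=
    minimalPeriod_apply (G.next.injective.mem_periodicPts _)
  have hshift : ∀ k, 0 < k → (⇑G.next)^[k] (ρ.1 u) = (⇑G.next)^[k - 1] (G.next (ρ.1 u)) :=
    fun k hk => by rw [← iterate_succ_apply, Nat.succ_eq_add_one, Nat.sub_add_cancel hk]
  have := iterate_injOn_Iio_minimalPeriod (f := G.next) (x := G.next (ρ.1 u))
    (show i - 1 ∈ Set.Iio _ by rw [hnext]; exact Set.mem_Iio.2 (by grind))
    (show j - 1 ∈ Set.Iio _ by rw [hnext]; exact Set.mem_Iio.2 (by grind))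
    (by simpa only [← hshift i hi.1, ← hshift j hj.1] using hij)
  grind

lemma exists_iterate_rotor_eq (ρ : G.RotorConfig) (d : G.D) :
    ∃ k, 0 < k ∧ (⇑G.next)^[k] (ρ.1 (G.src d)) = d := by
  obtain ⟨n, hn⟩ := G.next_cyclic (G.next (ρ.1 (G.src d))) d (by simp [G.src_next])
  exact ⟨n + 1, n.succ_pos, hn⟩

/-- Counted from `1`: the rotor itself needs a full turn, `period ρ (G.src d)`. -/
noncomputable def turns (ρ : G.RotorConfig) (d : G.D) : ℕ :=
  Nat.find (exists_iterate_rotor_eq ρ d)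

section Turns

variable (ρ : G.RotorConfig)

lemma turns_pos (d : G.D) : 0 < turns ρ d :=
  (Nat.find_spec (exists_iterate_rotor_eq ρ d)).1

lemma iterate_turns (d : G.D) : (⇑G.next)^[turns ρ d] (ρ.1 (G.src d)) = d :=
  (Nat.find_spec (exists_iterate_rotor_eq ρ d)).2

lemma turns_le {d : G.D} {k : ℕ} (hk : 0 < k) (h : (⇑G.next)^[k] (ρ.1 (G.src d)) = d) :
    turns ρ d ≤ k :=
  Nat.find_min' _ ⟨hk, h⟩

lemma turns_le_period (d : G.D) : turns ρ d ≤ period ρ (G.src d) := by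
  have hp := period_pos ρ (G.src d)
  have hmod : (⇑G.next)^[turns ρ d % period ρ (G.src d)] (ρ.1 (G.src d)) = d := by
    rw [period, iterate_mod_minimalPeriod_eq, iterate_turns]
  rcases Nat.eq_zero_or_pos (turns ρ d % period ρ (G.src d)) with h | h
  · rw [h, iterate_zero_apply] at hmod
    exact turns_le ρ hp (by rw [iterate_period, hmod])
  · exact (turns_le ρ h hmod).trans (Nat.mod_lt _ hp).le

lemma turns_eq {d : G.D} {k : ℕ} (hk : 0 < k) (hkp : k ≤ period ρ (G.src d))
    (h : (⇑G.next)^[k] (ρ.1 (G.src d)) = d) : turns ρ d = k :=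
  iterate_injOn_Ioc_period ρ (G.src d) ⟨turns_pos ρ d, turns_le_period ρ d⟩ ⟨hk, hkp⟩
    (by simp only [iterate_turns, h])

lemma turns_rotor (u : G.V) : turns ρ (ρ.1 u) = period ρ u := by
  have h := turns_eq ρ (d := ρ.1 u) (k := period ρ u)
  simp only [RotorConfig.src_apply] at h
  exact h (period_pos ρ u) le_rfl (iterate_period ρ u)

lemma eq_of_turns_eq {d e : G.D} (hsrc : G.src d = G.src e) (h : turns ρ d = turns ρ e) :
    d = e := by
  rw [← iterate_turns ρ d, ← iterate_turns ρ e, h, hsrc]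

lemma sum_range_iterate_rotor {M : Type*} [AddCommMonoid M] (u : G.V) {m : ℕ}
    (hm : m ≤ period ρ u) (f : G.D → M) :
    ∑ k ∈ range m, f ((⇑G.next)^[k + 1] (ρ.1 u)) =
      ∑ d with G.src d = u ∧ turns ρ d ≤ m, f d := by
  have hsrc : ∀ k, G.src ((⇑G.next)^[k] (ρ.1 u)) = u := fun k => by
    rw [src_iterate_next, RotorConfig.src_apply]
  have hturns : ∀ k < m, turns ρ ((⇑G.next)^[k + 1] (ρ.1 u)) = k + 1 := fun k hk =>
    turns_eq ρ k.succ_pos (by rw [hsrc]; omega) (by rw [hsrc])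
  refine sum_nbij' (fun k => (⇑G.next)^[k + 1] (ρ.1 u)) (fun d => turns ρ d - 1)
    (fun k hk => ?_) (fun d hd => ?_) (fun k hk => ?_) (fun d hd => ?_) (fun _ _ => rfl)
  · simp only [mem_range, mem_filter, mem_univ, true_and] at hk ⊢
    exact ⟨hsrc _, by rw [hturns k hk]; omega⟩
  · simp only [mem_range, mem_filter, mem_univ, true_and] at hd ⊢
    have := turns_pos ρ d
    omega
  · rw [hturns k (mem_range.1 hk), Nat.add_sub_cancel]
  · simp only [mem_filter, mem_univ, true_and] at hd
    rw [Nat.sub_add_cancel (turns_pos ρ d), ← hd.1, iterate_turns]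

end Turns

/-- The number of times the chip enters `u` while every vertex `w` is fired `o w` times,
starting from the rotors `ρ`. -/
def inflow (ρ : G.RotorConfig) (o : G.V → ℕ) (u : G.V) : ℕ :=
  ∑ w, ∑ k ∈ range (o w), if G.tgt ((⇑G.next)^[k + 1] (ρ.1 w)) = u then 1 else 0

lemma rrStep_rotor_apply (p : G.RotorConfig × G.V) (w : G.V) :
    (G.rrStep p).1.1 w = if w = p.2 then G.next (p.1.1 p.2) else p.1.1 w :=
  rfl

lemma inflow_zero (ρ : G.RotorConfig) (u : G.V) : inflow ρ 0 u = 0 := by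
  simp [inflow]

lemma one_le_inflow (ρ : G.RotorConfig) (o : G.V → ℕ) {w : G.V} (hw : 0 < o w) :
    1 ≤ inflow ρ o (G.tgt ((⇑G.next)^[o w] (ρ.1 w))) := by
  set u := G.tgt ((⇑G.next)^[o w] (ρ.1 w))
  calc 1 = if G.tgt ((⇑G.next)^[o w - 1 + 1] (ρ.1 w)) = u then 1 else 0 := by
        rw [Nat.sub_add_cancel hw, if_pos rfl]
    _ ≤ ∑ k ∈ range (o w), if G.tgt ((⇑G.next)^[k + 1] (ρ.1 w)) = u then 1 else 0 :=
        single_le_sum (f := fun k => if G.tgt ((⇑G.next)^[k + 1] (ρ.1 w)) = u then 1 else 0)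
          (fun _ _ => Nat.zero_le _) (mem_range.2 (Nat.sub_lt hw one_pos))
    _ ≤ inflow ρ o u :=
        single_le_sum (f := fun w => ∑ k ∈ range (o w),
          if G.tgt ((⇑G.next)^[k + 1] (ρ.1 w)) = u then 1 else 0)
          (fun _ _ => Nat.zero_le _) (mem_univ w)

lemma update_add_ite {o : G.V → ℕ} {a : G.V} {n : ℕ} (ha : o a = n + 1) (u : G.V) :
    o u = update o a n u + if u = a then 1 else 0 := by
  by_cases h : u = a
  · subst h; simp [ha]
  · simp [h]

lemma inflow_eq_inflow_rrStep (ρ : G.RotorConfig) {o : G.V → ℕ} {a : G.V} {n : ℕ}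
    (ha : o a = n + 1) (u : G.V) :
    inflow ρ o u = inflow (G.rrStep (ρ, a)).1 (update o a n) u +
      if u = (G.rrStep (ρ, a)).2 then 1 else 0 := by
  have hw : ∀ w, (∑ k ∈ range (o w), if G.tgt ((⇑G.next)^[k + 1] (ρ.1 w)) = u then 1 else 0) =
      (∑ k ∈ range (update o a n w),
        if G.tgt ((⇑G.next)^[k + 1] ((G.rrStep (ρ, a)).1.1 w)) = u then 1 else 0) +
      if w = a then (if u = (G.rrStep (ρ, a)).2 then 1 else 0) else 0 := by
    intro w
    by_cases h : w = a
    · subst h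
      simp only [ha, rrStep_rotor_apply, update_self, if_true, sum_range_succ', iterate_succ_apply]
      simp only [rrStep, eq_comm, iterate_zero_apply]
    · simp only [rrStep_rotor_apply, update_of_ne h, if_neg h, add_zero]
  simp only [inflow, hw, sum_add_distrib, sum_ite_eq', mem_univ, if_true]

/-- Conservation at `a` forces `a = v`; then positivity of `o` propagates along the final
rotors, which lead to `v`. -/
lemma eq_zero_of_eq_zero_at_chip {ρ σ : G.RotorConfig} {o : G.V → ℕ} {a v : G.V}
    (hσ : ∀ u, σ.1 u = (⇑G.next)^[o u] (ρ.1 u))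
    (hflow : ∀ u, inflow ρ o u + (if u = a then 1 else 0) = o u + if u = v then 1 else 0)
    (hreach : ∀ u, ∃ n, (G.cfgStep σ)^[n] u = v) (ha : o a = 0) (u : G.V) : o u = 0 := by
  have hav : a = v := by
    by_contra h
    have := hflow a
    simp [ha, h] at this
  have hbal : ∀ w, inflow ρ o w = o w := fun w => by
    have := hflow w
    rw [hav] at this
    omega
  have hstep : ∀ w, 0 < o w → 0 < o (G.cfgStep σ w) := fun w hw => by
    rw [cfgStep, hσ, ← hbal]
    exact one_le_inflow ρ o hw
  by_contra hu
  obtain ⟨n, hn⟩ := hreach u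
  have := Iterate.rec (fun w => 0 < o w) (Nat.pos_of_ne_zero hu) hstep n
  rw [hn, ← hav, ha] at this
  exact this.false

theorem iterate_rrStep_eq_of_inflow {ρ σ : G.RotorConfig} {o : G.V → ℕ} {a v : G.V}
    (hσ : ∀ u, σ.1 u = (⇑G.next)^[o u] (ρ.1 u))
    (hflow : ∀ u, inflow ρ o u + (if u = a then 1 else 0) = o u + if u = v then 1 else 0)
    (hreach : ∀ u, ∃ n, (G.cfgStep σ)^[n] u = v) :
    (G.rrStep)^[∑ u, o u] (ρ, a) = (σ, v) := by
  obtain ⟨N, hN⟩ : ∃ N, ∑ u, o u = N := ⟨_, rfl⟩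
  rw [hN]
  induction N generalizing ρ o a with
  | zero =>
    have ho : o = 0 := funext fun u => (sum_eq_zero_iff.1 hN) u (mem_univ u)
    subst ho
    have hav : a = v := by
      by_contra h
      have := hflow a
      simp [inflow_zero, h] at this
    have hρσ : ρ = σ := Subtype.ext (funext fun u => by rw [hσ]; rfl)
    rw [iterate_zero_apply, hρσ, hav]
  | succ N ih =>
    obtain ⟨n, ha⟩ : ∃ n, o a = n + 1 := Nat.exists_eq_succ_of_ne_zero fun h => by
      simp [sum_eq_zero fun u _ => eq_zero_of_eq_zero_at_chip hσ hflow hreach h u] at hN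
    have hupd := update_add_ite ha
    rw [iterate_succ_apply, ← Prod.mk.eta (p := G.rrStep (ρ, a))]
    refine ih (o := update o a n) (fun u => ?_) (fun u => ?_) ?_
    · rw [hσ, rrStep_rotor_apply]
      by_cases h : u = a
      · subst h; simp [ha]
      · simp [h]
    · have := hflow u
      rw [inflow_eq_inflow_rrStep ρ ha, hupd u] at this
      omega
    · simp only [hupd, sum_add_distrib, sum_ite_eq', mem_univ, if_true] at hN
      omega

lemma inflow_eq_card (ρ : G.RotorConfig) {o : G.V → ℕ} (ho : ∀ w, o w ≤ period ρ w) (u : G.V) :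
    inflow ρ o u = #{d | G.tgt d = u ∧ turns ρ d ≤ o (G.src d)} := by
  have hfib : ∀ w, ({d | G.src d = w ∧ turns ρ d ≤ o w} : Finset G.D) =
      {d ∈ ({d | turns ρ d ≤ o (G.src d)} : Finset G.D) | G.src d = w} := fun w => by
    ext d
    simp only [mem_filter, mem_univ, true_and]
    exact ⟨fun ⟨h1, h2⟩ => ⟨h1 ▸ h2, h1⟩, fun ⟨h1, h2⟩ => ⟨h2, h2 ▸ h1⟩⟩
  calc inflow ρ o u
      = ∑ w, ∑ d with G.src d = w ∧ turns ρ d ≤ o w, if G.tgt d = u then 1 else 0 :=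
        sum_congr rfl fun w _ =>
          sum_range_iterate_rotor ρ w (ho w) (fun d => if G.tgt d = u then 1 else 0)
    _ = #{d | G.tgt d = u ∧ turns ρ d ≤ o (G.src d)} := by
        simp only [hfib]
        rw [sum_fiberwise, card_filter, sum_filter]
        exact sum_congr rfl fun d _ => by rw [ite_and]; split_ifs <;> rfl

lemma eq_card_src (ρ : G.RotorConfig) {o : G.V → ℕ} {u : G.V} (ho : o u ≤ period ρ u) :
    o u = #{d | G.src d = u ∧ turns ρ d ≤ o (G.src d)} := by
  have h := sum_range_iterate_rotor ρ u ho (fun _ => 1)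
  simp only [sum_const, card_range, smul_eq_mul, mul_one] at h
  rw [h]
  congr 1
  exact filter_congr fun d _ => ⟨fun ⟨h1, h2⟩ => ⟨h1, h1 ▸ h2⟩, fun ⟨h1, h2⟩ => ⟨h1, h1 ▸ h2⟩⟩

lemma src_swap_eq_iff {a b : G.D} {u : G.V} (ha : G.src a = u) (hb : G.src b = u) (d : G.D) :
    G.src (Equiv.swap a b d) = u ↔ G.src d = u := by
  rw [Equiv.swap_apply_def]
  split_ifs with h1 h2
  · simp only [h1, ha, hb]
  · simp only [h2, ha, hb]
  · rfl

lemma card_tgt_eq_card_src {P : G.D → Prop} [DecidablePred P] {u : G.V} {a b : G.D}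
    (ha : G.src a = u) (hb : G.src b = u)
    (h : ∀ d, G.src d = u → (P (G.rev d) ↔ P (Equiv.swap a b d))) :
    #{d | G.tgt d = u ∧ P d} = #{d | G.src d = u ∧ P d} := by
  refine card_equiv ((Involutive.toPerm _ (show Involutive G.rev from G.rev_rev)).trans
    (Equiv.swap a b)) fun d => ?_
  simp only [mem_filter, mem_univ, true_and, Equiv.trans_apply, Involutive.coe_toPerm,
    src_swap_eq_iff ha hb, src_rev]
  constructor
  · rintro ⟨hd, hP⟩
    exact ⟨hd, (h _ hd).1 (by rwa [G.rev_rev])⟩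
  · rintro ⟨hd, hP⟩
    exact ⟨hd, by simpa only [G.rev_rev] using (h _ hd).2 hP⟩

lemma src_mem_of_leftOf {C : G.DirCycle} {d : G.D} (h : G.LeftOf C d) :
    G.src d ∈ G.cverts C := by
  obtain ⟨dout, hdout, -, -, hsrc, -⟩ := h
  exact hsrc ▸ List.mem_map_of_mem hdout

lemma src_mem_of_rightOf {C : G.DirCycle} {d : G.D} (h : G.RightOf C d) :
    G.src d ∈ G.cverts C := by
  obtain ⟨dout, hdout, -, -, hsrc, -⟩ := h
  exact hsrc ▸ List.mem_map_of_mem hdout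

lemma isWitness_of_pairwise {C : G.DirCycle} {p : List G.D} (hp : p ≠ [])
    (hchain : p.IsChain (fun a b => G.tgt a = G.src b))
    (hpair : p.Pairwise (fun a b => a ≠ b ∧ a ≠ G.rev b))
    (htail : ∀ d ∈ p.tail, G.src d ∉ G.cverts C)
    (hleft : G.LeftOf C (p.head hp)) (hright : G.RightOf C (G.rev (p.getLast hp))) :
    G.IsWitness C p := by
  refine ⟨hp, hchain, src_mem_of_leftOf hleft, src_mem_of_rightOf hright, ?_, ?_, hleft, hright⟩
  · obtain ⟨x, t, rfl⟩ := List.exists_cons_of_ne_nil hp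
    rintro ⟨_ | i, hi⟩ h0
    · exact absurd rfl h0
    · exact htail _ (List.getElem_mem (Nat.lt_of_succ_lt_succ hi))
  · rintro ⟨i, hi⟩ ⟨j, hj⟩ hij
    have hne : i ≠ j := fun h => hij (Fin.ext h)
    rcases Nat.lt_or_gt_of_ne hne with h | h
    · exact List.pairwise_iff_getElem.1 hpair i j hi hj h
    · obtain ⟨h1, h2⟩ := List.pairwise_iff_getElem.1 hpair j i hj hi h
      refine ⟨Ne.symm h1, fun h3 => h2 ?_⟩
      simp only [List.get_eq_getElem] at h3
      rw [h3, G.rev_rev]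

namespace DirCycle

variable (C : G.DirCycle) (ρ : G.RotorConfig)

lemma length_pos : 0 < C.darts.length := List.length_pos_iff.2 C.ne

lemma tgt_getElem {i : ℕ} (hi : i < C.darts.length) :
    G.tgt C.darts[i] = G.src (C.darts[(i + 1) % C.darts.length]'(Nat.mod_lt _ C.length_pos)) := by
  by_cases h : i + 1 < C.darts.length
  · simp only [Nat.mod_eq_of_lt h]
    exact List.isChain_iff_getElem.1 C.chain i h
  · have hlast : i = C.darts.length - 1 := by omega
    have := C.wrap
    simp only [List.getLast_eq_getElem, List.head_eq_getElem_zero] at this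
    simp only [hlast, Nat.sub_add_cancel C.length_pos, Nat.mod_self, this]

def vertex (i : ℕ) : G.V := G.src (C.darts[i % C.darts.length]'(Nat.mod_lt _ C.length_pos))

lemma vertex_mem (i : ℕ) : C.vertex i ∈ G.cverts C :=
  List.mem_map_of_mem (List.getElem_mem _)

lemma exists_vertex_eq {u : G.V} (hu : u ∈ G.cverts C) :
    ∃ i < C.darts.length, C.vertex i = u := by
  obtain ⟨i, hi, rfl⟩ := List.getElem_of_mem hu
  rw [cverts, List.length_map] at hi
  exact ⟨i, hi, by simp [vertex, cverts, Nat.mod_eq_of_lt hi]⟩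

lemma vertex_add_length (i : ℕ) : C.vertex (i + C.darts.length) = C.vertex i := by
  simp only [vertex, Nat.add_mod_right]

/-- The predecessor of `u` along the cycle of `ρ`. -/
def prev (u : G.V) : G.V := (G.cfgStep ρ)^[C.darts.length - 1] u

/-- The incoming cycle dart at `u`, reversed: the rotor at `u` once `C` is reversed. -/
def backDart (u : G.V) : G.D := G.rev (ρ.1 (C.prev ρ u))

/-- `G.RightOf C d`, measured in `turns` from the outgoing cycle dart. -/
def IsRight (d : G.D) : Prop :=
  G.src d ∈ G.cverts C ∧ turns ρ d < turns ρ (C.backDart ρ (G.src d))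

def IsLeft (d : G.D) : Prop :=
  G.src d ∈ G.cverts C ∧ turns ρ (C.backDart ρ (G.src d)) < turns ρ d ∧
    turns ρ d < period ρ (G.src d)

/-- A trail that stays off `C` until it enters `C` from the right with its last dart, using
no edge twice (so that a dart from the left of `C` followed by it is a witness). -/
structure IsRightTrail (s : List G.D) : Prop where
  chain : s.IsChain (fun a b => G.tgt a = G.src b)
  pairwise : s.Pairwise (fun a b => a ≠ b ∧ a ≠ G.rev b)
  src_not_mem : ∀ d ∈ s, G.src d ∉ G.cverts C
  ne_nil : s ≠ []
  isRight_rev_getLast : C.IsRight ρ (G.rev (s.getLast ne_nil))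

def RightSide (u : G.V) : Prop := ∃ d s, G.src d = u ∧ C.IsRightTrail ρ (d :: s)

open scoped Classical in
noncomputable def odometer (u : G.V) : ℕ :=
  if u ∈ G.cverts C then turns ρ (C.backDart ρ u) else if C.RightSide ρ u then period ρ u else 0

variable {C ρ}

lemma tgt_backDart (u : G.V) : G.tgt (C.backDart ρ u) = C.prev ρ u := by
  rw [backDart, tgt_rev, RotorConfig.src_apply]

lemma eq_rotor_of_rev_eq_backDart {d : G.D} (h : G.rev d = C.backDart ρ (G.tgt d)) :
    d = ρ.1 (G.src d) := by
  have hd : d = ρ.1 (C.prev ρ (G.tgt d)) := rev_injective h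
  have hs : G.src d = C.prev ρ (G.tgt d) := (congrArg G.src hd).trans (RotorConfig.src_apply _ _)
  rw [hs]
  exact hd

lemma IsRightTrail.singleton {d : G.D} (hd : G.src d ∉ G.cverts C)
    (hr : C.IsRight ρ (G.rev d)) : C.IsRightTrail ρ [d] :=
  ⟨List.isChain_singleton _, List.pairwise_singleton _ _, by simpa using hd,
    List.cons_ne_nil _ _, hr⟩

lemma IsRightTrail.of_append {l₁ l₂ : List G.D} (h : C.IsRightTrail ρ (l₁ ++ l₂))
    (hl₂ : l₂ ≠ []) : C.IsRightTrail ρ l₂ :=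
  ⟨h.chain.right_of_append, (List.pairwise_append.1 h.pairwise).2.1,
    fun d hd => h.src_not_mem d (List.mem_append_right _ hd), hl₂,
    by simpa only [List.getLast_append_of_ne_nil _ hl₂] using h.isRight_rev_getLast⟩

lemma IsRightTrail.cons {x : G.D} {s : List G.D} (h : C.IsRightTrail ρ s)
    (hx : G.src x ∉ G.cverts C) (hchain : ∀ y ∈ s.head?, G.tgt x = G.src y)
    (hne : ∀ y ∈ s, x ≠ y ∧ x ≠ G.rev y) : C.IsRightTrail ρ (x :: s) :=
  ⟨h.chain.cons hchain, List.pairwise_cons.2 ⟨hne, h.pairwise⟩,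
    List.forall_mem_cons.2 ⟨hx, h.src_not_mem⟩, List.cons_ne_nil _ _,
    by simpa only [List.getLast_cons h.ne_nil] using h.isRight_rev_getLast⟩

lemma IsRightTrail.eq_getLast {s : List G.D} (h : C.IsRightTrail ρ s) {y : G.D} (hy : y ∈ s)
    (htgt : G.tgt y ∈ G.cverts C) : y = s.getLast h.ne_nil := by
  obtain ⟨l₁, l₂, rfl⟩ := List.append_of_mem hy
  cases l₂ with
  | nil => simp
  | cons z l₂ =>
    have hyz := (List.isChain_append_cons_cons.1 h.chain).2.1
    exact absurd (hyz ▸ htgt) (h.src_not_mem z (by simp))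

lemma RightSide.not_mem {u : G.V} (h : C.RightSide ρ u) : u ∉ G.cverts C := by
  obtain ⟨d, s, rfl, hs⟩ := h
  exact hs.src_not_mem d List.mem_cons_self

lemma rightSide_src {d : G.D} (hd : G.src d ∉ G.cverts C) (hr : C.IsRight ρ (G.rev d)) :
    C.RightSide ρ (G.src d) :=
  ⟨d, [], rfl, .singleton hd hr⟩

/-- The right side is closed under steps that avoid `C`: a trail from the start either already
passes through the step, in one direction or the other, and can be cut, or is extended by it. -/
lemma RightSide.tgt {d : G.D} (h : C.RightSide ρ (G.src d)) (hd : G.tgt d ∉ G.cverts C) :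
    C.RightSide ρ (G.tgt d) := by
  obtain ⟨x, s, hx, hs⟩ := h
  by_cases hmem : d ∈ x :: s
  · obtain ⟨l₁, l₂, hl⟩ := List.append_of_mem hmem
    rw [hl] at hs
    cases l₂ with
    | nil =>
      have := hs.isRight_rev_getLast.1
      simp only [List.getLast_append_singleton, src_rev] at this
      exact absurd this hd
    | cons y l₂ =>
      refine ⟨y, l₂, ((List.isChain_append_cons_cons.1 hs.chain).2.1).symm, ?_⟩
      rw [List.append_cons] at hs
      exact hs.of_append (List.cons_ne_nil _ _)
  by_cases hrev : G.rev d ∈ x :: s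
  · obtain ⟨l₁, l₂, hl⟩ := List.append_of_mem hrev
    rw [hl] at hs
    exact ⟨G.rev d, l₂, rfl, hs.of_append (List.cons_ne_nil _ _)⟩
  refine ⟨G.rev d, x :: s, rfl, hs.cons hd (by simp [hx]) fun y hy => ⟨?_, ?_⟩⟩
  · rintro rfl
    exact hrev hy
  · intro h
    rw [rev_injective h] at hmem
    exact hmem hy

lemma odometer_of_mem {u : G.V} (hu : u ∈ G.cverts C) :
    C.odometer ρ u = turns ρ (C.backDart ρ u) :=
  if_pos hu

lemma odometer_pos {u : G.V} (hu : u ∈ G.cverts C) : 0 < C.odometer ρ u := by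
  rw [odometer_of_mem hu]
  exact turns_pos ρ _

lemma fires_iff_rightSide {d : G.D} (hd : G.src d ∉ G.cverts C) :
    turns ρ d ≤ C.odometer ρ (G.src d) ↔ C.RightSide ρ (G.src d) := by
  unfold odometer
  rw [if_neg hd]
  split_ifs with h
  · exact iff_of_true (turns_le_period ρ d) h
  · exact iff_of_false (turns_pos ρ d).not_ge h

end DirCycle

namespace IsCycleOf

open DirCycle

variable {C : G.DirCycle} {ρ σ : G.RotorConfig}

lemma rotor_mem_darts (hcyc : G.IsCycleOf ρ C) {u : G.V} (hu : u ∈ G.cverts C) :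
    ρ.1 u ∈ C.darts := by
  obtain ⟨d, hd, rfl⟩ := List.mem_map.1 hu
  rw [hcyc.1 d hd]
  exact hd

lemma cfgStep_vertex (hcyc : G.IsCycleOf ρ C) (i : ℕ) :
    G.cfgStep ρ (C.vertex i) = C.vertex (i + 1) := by
  rw [cfgStep, vertex, hcyc.1 _ (List.getElem_mem _), tgt_getElem, vertex]
  simp only [Nat.mod_add_mod]

lemma iterate_cfgStep_vertex (hcyc : G.IsCycleOf ρ C) (k i : ℕ) :
    (G.cfgStep ρ)^[k] (C.vertex i) = C.vertex (i + k) := by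
  induction k with
  | zero => rfl
  | succ k ih => rw [iterate_succ_apply', ih, hcyc.cfgStep_vertex, Nat.add_assoc]

lemma cfgStep_mem (hcyc : G.IsCycleOf ρ C) {u : G.V} (hu : u ∈ G.cverts C) :
    G.cfgStep ρ u ∈ G.cverts C := by
  obtain ⟨i, -, rfl⟩ := C.exists_vertex_eq hu
  rw [hcyc.cfgStep_vertex]
  exact C.vertex_mem _

lemma iterate_length_cfgStep (hcyc : G.IsCycleOf ρ C) {u : G.V} (hu : u ∈ G.cverts C) :
    (G.cfgStep ρ)^[C.darts.length] u = u := by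
  obtain ⟨i, -, rfl⟩ := C.exists_vertex_eq hu
  rw [hcyc.iterate_cfgStep_vertex, vertex_add_length]

lemma exists_iterate_cfgStep_eq (hcyc : G.IsCycleOf ρ C) {u w : G.V} (hu : u ∈ G.cverts C)
    (hw : w ∈ G.cverts C) : ∃ m, (G.cfgStep ρ)^[m] u = w := by
  obtain ⟨i, hi, rfl⟩ := C.exists_vertex_eq hu
  obtain ⟨j, -, rfl⟩ := C.exists_vertex_eq hw
  refine ⟨C.darts.length - i + j, ?_⟩
  rw [hcyc.iterate_cfgStep_vertex,
    show i + (C.darts.length - i + j) = j + C.darts.length by omega, vertex_add_length]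

lemma periodic_of_mem (hcyc : G.IsCycleOf ρ C) {u : G.V} (hu : u ∈ G.cverts C) :
    G.Periodic ρ u :=
  ⟨_, C.length_pos, hcyc.iterate_length_cfgStep hu⟩

lemma prev_mem (hcyc : G.IsCycleOf ρ C) {u : G.V} (hu : u ∈ G.cverts C) :
    C.prev ρ u ∈ G.cverts C :=
  Iterate.rec (· ∈ G.cverts C) hu (fun _ => hcyc.cfgStep_mem) _

lemma cfgStep_prev (hcyc : G.IsCycleOf ρ C) {u : G.V} (hu : u ∈ G.cverts C) :
    G.cfgStep ρ (C.prev ρ u) = u := by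
  rw [prev, ← iterate_succ_apply' (G.cfgStep ρ), Nat.succ_eq_add_one,
    Nat.sub_add_cancel C.length_pos, hcyc.iterate_length_cfgStep hu]

lemma prev_cfgStep (hcyc : G.IsCycleOf ρ C) {u : G.V} (hu : u ∈ G.cverts C) :
    C.prev ρ (G.cfgStep ρ u) = u := by
  rw [prev, ← iterate_succ_apply (G.cfgStep ρ), Nat.succ_eq_add_one,
    Nat.sub_add_cancel C.length_pos, hcyc.iterate_length_cfgStep hu]

lemma src_backDart (hcyc : G.IsCycleOf ρ C) {u : G.V} (hu : u ∈ G.cverts C) :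
    G.src (C.backDart ρ u) = u :=
  hcyc.cfgStep_prev hu

lemma backDart_cfgStep (hcyc : G.IsCycleOf ρ C) {u : G.V} (hu : u ∈ G.cverts C) :
    C.backDart ρ (G.cfgStep ρ u) = G.rev (ρ.1 u) := by
  rw [backDart, hcyc.prev_cfgStep hu]

lemma iterate_turns_backDart (hcyc : G.IsCycleOf ρ C) {u : G.V} (hu : u ∈ G.cverts C) :
    (⇑G.next)^[turns ρ (C.backDart ρ u)] (ρ.1 u) = C.backDart ρ u := by
  have h := iterate_turns ρ (C.backDart ρ u)
  rwa [hcyc.src_backDart hu] at h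

lemma turns_backDart_le_period (hcyc : G.IsCycleOf ρ C) {u : G.V} (hu : u ∈ G.cverts C) :
    turns ρ (C.backDart ρ u) ≤ period ρ u := by
  simpa only [hcyc.src_backDart hu] using turns_le_period ρ (C.backDart ρ u)

lemma rightOf_of_isRight (hcyc : G.IsCycleOf ρ C) {d : G.D} (h : C.IsRight ρ d) :
    G.RightOf C d := by
  obtain ⟨hu, hlt⟩ := h
  refine ⟨ρ.1 (G.src d), hcyc.rotor_mem_darts hu, ρ.1 (C.prev ρ (G.src d)),
    hcyc.rotor_mem_darts (hcyc.prev_mem hu), RotorConfig.src_apply _ _, hcyc.cfgStep_prev hu,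
    turns ρ d, _, turns_pos ρ d, hlt, iterate_turns ρ d, hcyc.iterate_turns_backDart hu,
    fun j hj hjb heq => ?_⟩
  have := turns_le ρ hj (d := C.backDart ρ (G.src d)) (by rwa [hcyc.src_backDart hu])
  omega

lemma leftOf_of_isLeft (hcyc : G.IsCycleOf ρ C) {d : G.D} (h : C.IsLeft ρ d) :
    G.LeftOf C d := by
  obtain ⟨hu, hlt, hltp⟩ := h
  set u := G.src d
  set b := turns ρ (C.backDart ρ u)
  have hb : (⇑G.next)^[b] (ρ.1 u) = G.rev (ρ.1 (C.prev ρ u)) := hcyc.iterate_turns_backDart hu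
  have hshift : ∀ k, b ≤ k →
      (⇑G.next)^[k - b] (G.rev (ρ.1 (C.prev ρ u))) = (⇑G.next)^[k] (ρ.1 u) := fun k hk => by
    rw [← hb, ← iterate_add_apply, Nat.sub_add_cancel hk]
  refine ⟨ρ.1 u, hcyc.rotor_mem_darts hu, ρ.1 (C.prev ρ u),
    hcyc.rotor_mem_darts (hcyc.prev_mem hu), RotorConfig.src_apply _ _, hcyc.cfgStep_prev hu,
    turns ρ d - b, period ρ u - b, by omega, by omega, ?_, ?_, fun j hj hjp heq => ?_⟩
  · rw [hshift _ hlt.le, iterate_turns]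
  · rw [hshift _ (hlt.trans hltp).le, iterate_period]
  · rw [← hb, ← iterate_add_apply] at heq
    have := turns_le ρ (d := ρ.1 u) (k := j + b) (by omega) (by rwa [RotorConfig.src_apply])
    rw [turns_rotor] at this
    omega

lemma not_isLeft_and_isRight_rev (hcyc : G.IsCycleOf ρ C) (hsep : G.Separating C) {d : G.D}
    (hl : C.IsLeft ρ d) (hr : C.IsRight ρ (G.rev d)) : False :=
  hsep [d] (isWitness_of_pairwise (List.cons_ne_nil _ _) (List.isChain_singleton _)
    (List.pairwise_singleton _ _) (by simp) (hcyc.leftOf_of_isLeft hl) (hcyc.rightOf_of_isRight hr))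

/-- A step from the right side into `C` arrives on the right (or along the reversed incoming
cycle dart), since otherwise it would close a witness with a right trail. -/
lemma turns_rev_le_of_rightSide (hcyc : G.IsCycleOf ρ C) (hsep : G.Separating C) {δ : G.D}
    (h : C.RightSide ρ (G.src δ)) (hδ : G.tgt δ ∈ G.cverts C) :
    turns ρ (G.rev δ) ≤ turns ρ (C.backDart ρ (G.tgt δ)) := by
  by_contra hgt
  obtain ⟨x, s, hx, hs⟩ := h
  have hoff := RightSide.not_mem ⟨x, s, hx, hs⟩
  have hrotor : G.rev δ ≠ ρ.1 (G.tgt δ) := fun heq => hoff <| by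
    have := hcyc.cfgStep_mem hδ
    rwa [cfgStep, ← heq, tgt_rev] at this
  have hleft : C.IsLeft ρ (G.rev δ) := ⟨hδ, not_le.1 hgt, by
    refine (turns_le_period ρ _).lt_of_ne fun heq => hrotor (eq_of_turns_eq ρ ?_ ?_) <;>
      simp [turns_rotor, heq]⟩
  apply hsep (G.rev δ :: x :: s)
  refine isWitness_of_pairwise (List.cons_ne_nil _ _) (hs.chain.cons (by simp [hx]))
    (List.pairwise_cons.2 ⟨fun y hy => ⟨?_, ?_⟩, hs.pairwise⟩) hs.src_not_mem
    (hcyc.leftOf_of_isLeft hleft) ?_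
  · rintro rfl
    exact hs.src_not_mem _ hy hδ
  · intro heq
    rw [rev_injective heq] at hδ hgt
    rw [hs.eq_getLast hy hδ] at hgt
    exact hgt hs.isRight_rev_getLast.2.le
  · rw [List.getLast_cons (List.cons_ne_nil _ _)]
    exact hcyc.rightOf_of_isRight hs.isRight_rev_getLast

lemma odometer_le_period (hcyc : G.IsCycleOf ρ C) (u : G.V) : C.odometer ρ u ≤ period ρ u := by
  unfold odometer
  split_ifs with hu
  · exact hcyc.turns_backDart_le_period hu
  · exact le_rfl
  · exact Nat.zero_le _

lemma fires_iff_isRight (hcyc : G.IsCycleOf ρ C) {d : G.D} (hd : G.src d ∈ G.cverts C)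
    (hb : d ≠ C.backDart ρ (G.src d)) :
    turns ρ d ≤ C.odometer ρ (G.src d) ↔ C.IsRight ρ d := by
  rw [odometer_of_mem hd]
  refine ⟨fun h => ⟨hd, h.lt_of_ne fun heq => hb ?_⟩, fun h => h.2.le⟩
  exact eq_of_turns_eq ρ (hcyc.src_backDart hd).symm heq

lemma fires_rotor_iff (hcyc : G.IsCycleOf ρ C) {u : G.V} (hu : u ∈ G.cverts C) :
    turns ρ (ρ.1 u) ≤ C.odometer ρ (G.src (ρ.1 u)) ↔ C.backDart ρ u = ρ.1 u := by
  rw [RotorConfig.src_apply, odometer_of_mem hu, turns_rotor]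
  refine ⟨fun h => eq_of_turns_eq ρ (by rw [hcyc.src_backDart hu, RotorConfig.src_apply]) ?_,
    fun h => by rw [h, turns_rotor]⟩
  rw [turns_rotor]
  exact le_antisymm (hcyc.turns_backDart_le_period hu) h

lemma isLeft_of_not_isRight (hcyc : G.IsCycleOf ρ C) {d : G.D} (hd : G.src d ∈ G.cverts C)
    (hr : d ≠ ρ.1 (G.src d)) (hb : d ≠ C.backDart ρ (G.src d)) (h : ¬ C.IsRight ρ d) :
    C.IsLeft ρ d := by
  refine ⟨hd, lt_of_le_of_ne (not_lt.1 fun h' => h ⟨hd, h'⟩) fun heq => hb ?_,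
    (turns_le_period ρ d).lt_of_ne fun heq => hr ?_⟩
  · exact eq_of_turns_eq ρ (hcyc.src_backDart hd).symm heq.symm
  · exact eq_of_turns_eq ρ (RotorConfig.src_apply _ _).symm (by rw [heq, turns_rotor])

lemma eq_backDart_of_rev_eq_rotor (hcyc : G.IsCycleOf ρ C) {d : G.D}
    (ht : G.tgt d ∈ G.cverts C) (h : G.rev d = ρ.1 (G.tgt d)) : d = C.backDart ρ (G.src d) := by
  have hsrc : G.src d = G.cfgStep ρ (G.tgt d) := by rw [cfgStep, ← h, tgt_rev]
  rw [hsrc, hcyc.backDart_cfgStep ht, ← h, G.rev_rev]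

lemma fires_rev_iff_of_not_mem (hcyc : G.IsCycleOf ρ C) (hsep : G.Separating C) {d : G.D}
    (hd : G.src d ∉ G.cverts C) :
    turns ρ (G.rev d) ≤ C.odometer ρ (G.src (G.rev d)) ↔ turns ρ d ≤ C.odometer ρ (G.src d) := by
  rw [fires_iff_rightSide hd]
  by_cases ht : G.tgt d ∈ G.cverts C
  · rw [src_rev, odometer_of_mem ht]
    refine ⟨fun h => ?_, fun h => hcyc.turns_rev_le_of_rightSide hsep h ht⟩
    rcases h.lt_or_eq with hlt | heq
    · exact rightSide_src hd ⟨ht, hlt⟩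
    · have hb : d = ρ.1 (C.prev ρ (G.tgt d)) :=
        rev_injective (eq_of_turns_eq ρ (hcyc.src_backDart ht).symm heq)
      refine absurd ?_ hd
      rw [hb, RotorConfig.src_apply]
      exact hcyc.prev_mem ht
  · rw [fires_iff_rightSide ht]
    exact ⟨fun h => by simpa only [tgt_rev] using h.tgt (d := G.rev d) (by rwa [tgt_rev]),
      fun h => h.tgt ht⟩

lemma fires_rev_iff_of_mem_of_mem (hcyc : G.IsCycleOf ρ C) (hsep : G.Separating C) {d : G.D}
    (hs : G.src d ∈ G.cverts C) (ht : G.tgt d ∈ G.cverts C) (hr : d ≠ ρ.1 (G.src d))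
    (hb : d ≠ C.backDart ρ (G.src d)) :
    turns ρ (G.rev d) ≤ C.odometer ρ (G.src (G.rev d)) ↔ turns ρ d ≤ C.odometer ρ (G.src d) := by
  have hr' : G.rev d ≠ ρ.1 (G.tgt d) := fun h => hb (hcyc.eq_backDart_of_rev_eq_rotor ht h)
  have hb' : G.rev d ≠ C.backDart ρ (G.tgt d) := fun h => hr (eq_rotor_of_rev_eq_backDart h)
  rw [hcyc.fires_iff_isRight hs hb, hcyc.fires_iff_isRight (d := G.rev d) ht hb']
  refine ⟨fun h => ?_, fun h => ?_⟩
  · by_contra h'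
    exact hcyc.not_isLeft_and_isRight_rev hsep (hcyc.isLeft_of_not_isRight hs hr hb h') h
  · by_contra h'
    refine hcyc.not_isLeft_and_isRight_rev hsep
      (hcyc.isLeft_of_not_isRight (d := G.rev d) ht hr' hb' h') ?_
    rwa [G.rev_rev]

lemma backDart_eq_rotor_of_prev (hcyc : G.IsCycleOf ρ C) {u : G.V} (hu : u ∈ G.cverts C)
    (h : C.backDart ρ (C.prev ρ u) = ρ.1 (C.prev ρ u)) : C.backDart ρ u = ρ.1 u := by
  have hprev : C.prev ρ (C.prev ρ u) = u := by
    rw [← tgt_backDart, h]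
    exact hcyc.cfgStep_prev hu
  rw [backDart, ← h, backDart, G.rev_rev, hprev]

lemma fires_rev_iff_fires_swap (hcyc : G.IsCycleOf ρ C) (hsep : G.Separating C) {u : G.V}
    (hu : u ∈ G.cverts C) {d : G.D} (hd : G.src d = u) :
    turns ρ (G.rev d) ≤ C.odometer ρ (G.src (G.rev d)) ↔
      turns ρ (Equiv.swap (ρ.1 u) (C.backDart ρ u) d) ≤
        C.odometer ρ (G.src (Equiv.swap (ρ.1 u) (C.backDart ρ u) d)) := by
  by_cases hr : d = ρ.1 u
  · subst hr
    rw [Equiv.swap_apply_left, hcyc.src_backDart hu, odometer_of_mem hu, src_rev, ← cfgStep,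
      odometer_of_mem (hcyc.cfgStep_mem hu), hcyc.backDart_cfgStep hu]
    exact iff_of_true le_rfl le_rfl
  by_cases hb : d = C.backDart ρ u
  · subst hb
    rw [Equiv.swap_apply_right, backDart, G.rev_rev]
    refine iff_of_false (fun h => hr ?_) (fun h => hr ?_)
    · exact hcyc.backDart_eq_rotor_of_prev hu ((hcyc.fires_rotor_iff (hcyc.prev_mem hu)).1 h)
    · exact (hcyc.fires_rotor_iff hu).1 h
  rw [Equiv.swap_apply_of_ne_of_ne hr hb]
  subst hd
  by_cases ht : G.tgt d ∈ G.cverts C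
  · exact hcyc.fires_rev_iff_of_mem_of_mem hsep hu ht hr hb
  · simpa only [G.rev_rev] using (hcyc.fires_rev_iff_of_not_mem hsep (d := G.rev d) ht).symm

/-- The darts traversed under the reversal odometer are balanced at every vertex: `rev` matches
traversed darts into `u` with traversed darts out of `u`, up to swapping the rotor of `u` with
its reversed incoming cycle dart when `u` is on `C`. -/
lemma inflow_odometer (hcyc : G.IsCycleOf ρ C) (hsep : G.Separating C) (u : G.V) :
    inflow ρ (C.odometer ρ) u = C.odometer ρ u := by
  rw [inflow_eq_card ρ hcyc.odometer_le_period, eq_card_src ρ (hcyc.odometer_le_period u)]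
  by_cases hu : u ∈ G.cverts C
  · exact card_tgt_eq_card_src (RotorConfig.src_apply _ _) (hcyc.src_backDart hu)
      fun d hd => hcyc.fires_rev_iff_fires_swap hsep hu hd
  · refine card_tgt_eq_card_src (RotorConfig.src_apply ρ u) (RotorConfig.src_apply ρ u)
      fun d hd => ?_
    rw [Equiv.swap_self, Equiv.refl_apply]
    exact hcyc.fires_rev_iff_of_not_mem hsep (hd ▸ hu)

lemma reversal_apply_of_mem (hcyc : G.IsCycleOf ρ C) (hrev : G.IsReversal ρ σ) {u : G.V}
    (hu : u ∈ G.cverts C) : σ.1 u = C.backDart ρ u := by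
  have h := hrev.2 _ (hcyc.periodic_of_mem (hcyc.prev_mem hu))
  rwa [← cfgStep, hcyc.cfgStep_prev hu] at h

lemma reversal_apply_of_not_mem (hcyc : G.IsCycleOf ρ C) (hrev : G.IsReversal ρ σ) {u : G.V}
    (hu : u ∉ G.cverts C) : σ.1 u = ρ.1 u :=
  hrev.1 u fun hp => hu (hcyc.2 u hp)

lemma reversal_eq_iterate_odometer (hcyc : G.IsCycleOf ρ C) (hrev : G.IsReversal ρ σ)
    (u : G.V) : σ.1 u = (⇑G.next)^[C.odometer ρ u] (ρ.1 u) := by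
  by_cases hu : u ∈ G.cverts C
  · rw [hcyc.reversal_apply_of_mem hrev hu, odometer_of_mem hu, hcyc.iterate_turns_backDart hu]
  · rw [hcyc.reversal_apply_of_not_mem hrev hu, odometer, if_neg hu]
    split_ifs
    · exact (iterate_period ρ u).symm
    · rfl

lemma iterate_cfgStep_reversal_iterate (hcyc : G.IsCycleOf ρ C) (hrev : G.IsReversal ρ σ)
    (m : ℕ) {v : G.V} (hv : v ∈ G.cverts C) :
    (G.cfgStep σ)^[m] ((G.cfgStep ρ)^[m] v) = v := by
  induction m generalizing v with
  | zero => rfl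
  | succ m ih =>
    rw [iterate_succ_apply (G.cfgStep ρ), iterate_succ_apply' (G.cfgStep σ),
      ih (hcyc.cfgStep_mem hv), cfgStep, hcyc.reversal_apply_of_mem hrev (hcyc.cfgStep_mem hv),
      hcyc.backDart_cfgStep hv, tgt_rev, RotorConfig.src_apply]

/-- Off `C` the reversal changes no rotor, so from every vertex one still reaches `C`; along `C`
one now walks backwards. -/
lemma exists_iterate_cfgStep_reversal_eq (hcyc : G.IsCycleOf ρ C) (hrev : G.IsReversal ρ σ)
    {v : G.V} (hv : v ∈ G.cverts C) (u : G.V) : ∃ n, (G.cfgStep σ)^[n] u = v := by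
  obtain ⟨m, n, hn, hper⟩ := exists_isPeriodicPt_iterate (G.cfgStep ρ) u
  obtain ⟨k, hk⟩ := exists_iterate_mem_of_eq_of_notMem (g := G.cfgStep σ)
    (s := {w | w ∈ G.cverts C}) (fun w hw => by
      rw [cfgStep, cfgStep, hcyc.reversal_apply_of_not_mem hrev hw]) (hcyc.2 _ ⟨n, hn, hper⟩)
  obtain ⟨l, hl⟩ := hcyc.exists_iterate_cfgStep_eq hv hk
  refine ⟨l + k, ?_⟩
  rw [iterate_add_apply, ← hl, hcyc.iterate_cfgStep_reversal_iterate hrev l hv]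

end IsCycleOf

end RibbonGraph

/-- every separating cycle is reversible: if no path witnesses that
`C` is nonseparating, then from any unicycle with unique directed cycle `C` the
cycle-reversed configuration is reachable by rotor-routing. -/
theorem separating_reversible (G : RibbonGraph) (C : G.DirCycle)
    (hsep : G.Separating C) :
    ∀ (ρ : G.RotorConfig) (v : G.V) (σ : G.RotorConfig),
      G.IsCycleOf ρ C → v ∈ G.cverts C → G.IsReversal ρ σ →
        G.Reaches (ρ, v) (σ, v) := by
  intro ρ v σ hcyc hv hrev
  have hpos : 0 < ∑ u, C.odometer ρ u :=
    (RibbonGraph.DirCycle.odometer_pos hv).trans_le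
      (Finset.single_le_sum (fun _ _ => Nat.zero_le _) (Finset.mem_univ v))
  refine ⟨_, hpos, RibbonGraph.iterate_rrStep_eq_of_inflow
    (hcyc.reversal_eq_iterate_odometer hrev) (fun u => ?_)
    (hcyc.exists_iterate_cfgStep_reversal_eq hrev hv)⟩
  rw [hcyc.inflow_odometer hsep]
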